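/- arXiv:math/0512048 — 2 statements merged into one kernel-verified Lean document; each statement's English description precedes it below -/
import Mathlib

section
/- Let f be a continuous 2π-periodic function, 0 < h < π, and s ≥ 2 with sh < π. Then the function x ↦ (f * B_h^s)(x) is differentiable and its derivative satisfies d/dx (f * B_h^s)(x) = (2h)^{−1} [ (f * B_h^{s−1})(x+h) − (f * B_h^{s−1})(x−h) ] for all x. -/
open scoped Real BigOperators
open MeasureTheory

noncomputable section

/-- Representative of `x` in `[-π, π)` on the circle `ℝ/2πℤ`. -/
def rep (x : ℝ) : ℝ := x - 2 * Real.pi * ⌊(x + Real.pi) / (2 * Real.pi)⌋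

/-- The basic averaging kernel `B_h^1` on the circle: `1/(2h)` on `[-h,h]`, `0` elsewhere. -/
def B1 (h : ℝ) (x : ℝ) : ℝ := if |rep x| ≤ h then 1 / (2 * h) else 0

/-- Convolution of real functions over the circle: `(f*g)(x) = ∫_T f(u) g(x-u) du`. -/
def convR (f g : ℝ → ℝ) (x : ℝ) : ℝ := ∫ u in (-Real.pi)..Real.pi, f u * g (x - u)

/-- The iterated kernels `B_h^s`, with `B_h^1 = B1 h` and `B_h^s = B_h^1 * B_h^{s-1}`. -/
def B (h : ℝ) : ℕ → ℝ → ℝ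
  | 0 => fun _ => 0
  | 1 => B1 h
  | (s + 2) => convR (B1 h) (B h (s + 1))

/-- Convolution `(f * g)(x) = ∫_T f(u) g(x-u) du` of a complex function `f`
with a real kernel `g`. -/
def convC (g : ℝ → ℝ) (f : ℝ → ℂ) (x : ℝ) : ℂ :=
  ∫ u in (-Real.pi)..Real.pi, f u * (g (x - u) : ℂ)

/-- The operators `I_{x,δ}^s f`: `I_{x,δ}^0 f = f(x)`, `I_{x,0}^s f = f(x)` (identity),
and `I_{x,δ}^s f = (f * B_{|δ|}^s)(x)` otherwise (so that `I_{x,-δ}^s = I_{x,δ}^s`). -/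
def Iop (x δ : ℝ) (s : ℕ) (f : ℝ → ℂ) : ℂ :=
  if s = 0 ∨ δ = 0 then f x else convC (B |δ| s) f x

/-- The smoothing operator `w_{x,h,2k}^s f = Σ_{i=0}^{2k} (-1)^{k-i} (C(2k,i)/C(2k,k)) I_{x,(i-k)h}^s f`. -/
def wop (x h : ℝ) (k s : ℕ) (f : ℝ → ℂ) : ℂ :=
  ∑ i ∈ Finset.range (2 * k + 1),
    ((-1 : ℂ) ^ ((k : ℤ) - (i : ℤ))) *
      ((Nat.choose (2 * k) i : ℂ) / (Nat.choose (2 * k) k : ℂ)) *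
        Iop x (((i : ℝ) - (k : ℝ)) * h) s f

/-- The `m`-th difference of a complex-valued `f` at `x` with step `h`:
`Δ_h^m f(x) = Σ_{i=0}^m (-1)^{m-i} C(m,i) f(x - (m/2)h + ih)`. -/
def deltaC (m : ℕ) (h : ℝ) (f : ℝ → ℂ) (x : ℝ) : ℂ :=
  ∑ i ∈ Finset.range (m + 1),
    ((-1 : ℂ) ^ (m - i)) * (Nat.choose m i : ℂ) * f (x - ((m : ℝ) / 2) * h + (i : ℝ) * h)

/-- The `m`-th difference of a real-valued `g` at `x` with step `h`. -/
def deltaR (m : ℕ) (h : ℝ) (g : ℝ → ℝ) (x : ℝ) : ℝ :=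
  ∑ i ∈ Finset.range (m + 1),
    ((-1 : ℝ) ^ (m - i)) * (Nat.choose m i : ℝ) * g (x - ((m : ℝ) / 2) * h + (i : ℝ) * h)

/-- Sup norm `‖f‖ = sup_{x ∈ T} |f(x)|`. -/
def supNorm (f : ℝ → ℂ) : ℝ := sSup {y : ℝ | ∃ x : ℝ, y = ‖f x‖}

/-- The `m`-th modulus of smoothness `ω_m(f,δ) = sup_{x, |h|<δ} |Δ_h^m f(x)|`. -/
def modulus (m : ℕ) (f : ℝ → ℂ) (δ : ℝ) : ℝ :=
  sSup {y : ℝ | ∃ x h : ℝ, |h| < δ ∧ y = ‖deltaC m h f x‖}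

/-- `τ` is a trigonometric polynomial of degree at most `n`. -/
def IsTrigPoly (n : ℕ) (τ : ℝ → ℂ) : Prop :=
  ∃ c : ℤ → ℂ, ∀ t : ℝ,
    τ t = ∑ j ∈ Finset.Icc (-(n : ℤ)) (n : ℤ), c j * Complex.exp ((j : ℂ) * t * Complex.I)

/-- The best uniform approximation `E_n(f) = inf_{τ ∈ T_n} ‖f - τ‖`. -/
def E (n : ℕ) (f : ℝ → ℂ) : ℝ :=
  sInf {y : ℝ | ∃ τ : ℝ → ℂ, IsTrigPoly n τ ∧ y = supNorm (fun x => f x - τ x)}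

/-- The `j`-th Fourier coefficient `ĉ_j(f) = (1/2π) ∫_T f(u) e^{-iju} du`. -/
def fc (f : ℝ → ℂ) (j : ℤ) : ℂ :=
  (1 / (2 * (Real.pi : ℂ))) * ∫ u in (-Real.pi)..Real.pi,
    f u * Complex.exp (-(j : ℂ) * (u : ℂ) * Complex.I)

/-- The `i`-th partial Fourier sum `s_i f(x) = Σ_{|j| ≤ i} ĉ_j(f) e^{ijx}`. -/
def PS (i : ℕ) (f : ℝ → ℂ) (x : ℝ) : ℂ :=
  ∑ j ∈ Finset.Icc (-(i : ℤ)) (i : ℤ), fc f j * Complex.exp ((j : ℂ) * (x : ℂ) * Complex.I)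

/-- The Fejér mean `σ_j f = (1/(j+1)) Σ_{i=0}^j s_i f`. -/
def Fej (j : ℕ) (f : ℝ → ℂ) (x : ℝ) : ℂ :=
  (1 / ((j : ℂ) + 1)) * ∑ i ∈ Finset.range (j + 1), PS i f x

/-- The de la Vallée Poussin mean `v_{k,m} f = (1/m) Σ_{i=km}^{(k+1)m-1} s_i f`. -/
def VP (k m : ℕ) (f : ℝ → ℂ) (x : ℝ) : ℂ :=
  (1 / (m : ℂ)) * ∑ i ∈ Finset.Ico (k * m) ((k + 1) * m), PS i f x

/-- `α = 2^{-5/2} 3^{1/2} π`. -/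
def alpha : ℝ := (2 : ℝ) ^ (-(5 / 2 : ℝ)) * Real.sqrt 3 * Real.pi

/-- The `L¹` norm on the circle of a complex function. -/
def L1C (g : ℝ → ℂ) : ℝ := ∫ u in (-Real.pi)..Real.pi, ‖g u‖

/-- The `L¹` norm on the circle of a real function. -/
def L1R (g : ℝ → ℝ) : ℝ := ∫ u in (-Real.pi)..Real.pi, |g u|

/-! Since `B_h^s = B_h^1 * B_h^{s-1}`, Fubini gives `f * B_h^s = (f * B_h^{s-1}) * B_h^1`, and
convolving with `B_h^1` is the moving average `F ↦ (2h)⁻¹ ∫_{x-h}^{x+h} F`. The function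
`F = f * B_h^{s-1}` is continuous (a continuous periodic function convolved with a bounded
kernel), so the fundamental theorem of calculus differentiates the moving average. -/

open Set Filter Function

lemma rep_periodic : Periodic rep (2 * π) := fun x => by
  have hdiv : (x + 2 * π + π) / (2 * π) = (x + π) / (2 * π) + 1 := by field_simp; ring
  simp only [rep, hdiv, Int.floor_add_one]
  push_cast
  ring

lemma rep_of_mem_Ico {v : ℝ} (hv : v ∈ Ico (-π) π) : rep v = v := by
  have hfloor : ⌊(v + π) / (2 * π)⌋ = 0 := by
    rw [Int.floor_eq_zero_iff, Set.mem_Ico, le_div_iff₀ Real.two_pi_pos,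
      div_lt_iff₀ Real.two_pi_pos]
    constructor <;> linarith [hv.1, hv.2]
  simp [rep, hfloor]

lemma abs_rep_of_mem_Icc {v : ℝ} (hv : v ∈ Icc (-π) π) : |rep v| = |v| := by
  rcases hv.2.lt_or_eq with hlt | rfl
  · rw [rep_of_mem_Ico ⟨hv.1, hlt⟩]
  · have hπ : rep π = rep (-π) := by rw [← rep_periodic (-π)]; ring_nf
    rw [hπ, rep_of_mem_Ico ⟨le_rfl, by linarith [Real.pi_pos]⟩, abs_neg]

lemma measurable_rep : Measurable rep :=
  measurable_id.sub (measurable_const.mul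
    (measurable_from_top.comp ((measurable_id.add_const _).div_const _).floor))

lemma measurable_B1 (h : ℝ) : Measurable (B1 h) :=
  Measurable.ite (measurableSet_le measurable_rep.abs measurable_const)
    measurable_const measurable_const

lemma B1_periodic (h : ℝ) : Periodic (B1 h) (2 * π) := fun x => by
  simp only [B1, rep_periodic x]

lemma abs_B1_le (h x : ℝ) : |B1 h x| ≤ |1 / (2 * h)| := by
  unfold B1
  split_ifs <;> simp

lemma B1_eq_indicator {h v : ℝ} (hv : v ∈ Icc (-π) π) :
    B1 h v = (Icc (-h) h).indicator (fun _ => 1 / (2 * h)) v := by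
  simp only [B1, abs_rep_of_mem_Icc hv, indicator, Set.mem_Icc, ← abs_le]

lemma measurable_convR {f g : ℝ → ℝ} (hf : Measurable f) (hg : Measurable g) :
    Measurable (convR f g) := by
  have hjoint : Measurable fun p : ℝ × ℝ => f p.2 * g (p.1 - p.2) :=
    (hf.comp measurable_snd).mul (hg.comp (measurable_fst.sub measurable_snd))
  have hset : convR f g = fun x => ∫ u in Ioc (-π) π, f u * g (x - u) := by
    funext x
    rw [convR, intervalIntegral.integral_of_le (by linarith [Real.pi_pos])]
  rw [hset]
  exact hjoint.stronglyMeasurable.integral_prod_right'.measurable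

lemma convR_periodic (f : ℝ → ℝ) {g : ℝ → ℝ} (hg : Periodic g (2 * π)) :
    Periodic (convR f g) (2 * π) := fun x => by
  simp only [convR, add_sub_right_comm x, hg _]

lemma abs_convR_le {f g : ℝ → ℝ} {Cf Cg : ℝ} (hf : ∀ x, |f x| ≤ Cf) (hg : ∀ x, |g x| ≤ Cg)
    (x : ℝ) : |convR f g x| ≤ Cf * Cg * (2 * π) := by
  have hbound : ∀ u ∈ uIoc (-π) π, ‖f u * g (x - u)‖ ≤ Cf * Cg := fun u _ => by
    rw [Real.norm_eq_abs, abs_mul]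
    exact mul_le_mul (hf u) (hg _) (abs_nonneg _) ((abs_nonneg _).trans (hf u))
  calc |convR f g x| ≤ Cf * Cg * |π - -π| :=
        intervalIntegral.norm_integral_le_of_norm_le_const hbound
    _ = Cf * Cg * (2 * π) := by rw [abs_of_nonneg (by linarith [Real.pi_pos])]; ring

lemma measurable_B (h : ℝ) : ∀ m, Measurable (B h m)
  | 0 => measurable_const
  | 1 => measurable_B1 h
  | m + 2 => measurable_convR (measurable_B1 h) (measurable_B h (m + 1))

lemma B_periodic (h : ℝ) : ∀ m, Periodic (B h m) (2 * π)
  | 0 => fun _ => rfl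
  | 1 => B1_periodic h
  | m + 2 => convR_periodic _ (B_periodic h (m + 1))

lemma exists_abs_B_le (h : ℝ) : ∀ m, ∃ C, ∀ x, |B h m x| ≤ C
  | 0 => ⟨0, fun _ => by simp [B]⟩
  | 1 => ⟨_, abs_B1_le h⟩
  | m + 2 =>
    have ⟨C, hC⟩ := exists_abs_B_le h (m + 1)
    ⟨_, abs_convR_le (abs_B1_le h) hC⟩

lemma convC_eq_integral_sub_mul {f : ℝ → ℂ} {g : ℝ → ℝ} (hf : Periodic f (2 * π))
    (hg : Periodic g (2 * π)) (x : ℝ) :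
    convC g f x = ∫ t in -π..π, f (x - t) * (g t : ℂ) := by
  have hφ : Periodic (fun t => f (x - t) * (g t : ℂ)) (2 * π) :=
    (hf.const_sub x).mul (hg.comp ((↑) : ℝ → ℂ))
  have hshift := hφ.intervalIntegral_add_eq (x - π) (-π)
  rw [show x - π + 2 * π = x + π by ring, show -π + 2 * π = π by ring] at hshift
  calc convC g f x = ∫ u in -π..π, f (x - (x - u)) * (g (x - u) : ℂ) := by simp [convC]
    _ = ∫ t in x - π..x + π, f (x - t) * (g t : ℂ) := by
      rw [intervalIntegral.integral_comp_sub_left (fun t => f (x - t) * (g t : ℂ)),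
        sub_neg_eq_add]
    _ = _ := hshift

lemma continuous_convC {f : ℝ → ℂ} {g : ℝ → ℝ} {M C : ℝ} (hf : Continuous f)
    (hfp : Periodic f (2 * π)) (hfM : ∀ x, ‖f x‖ ≤ M) (hg : Measurable g)
    (hgp : Periodic g (2 * π)) (hgC : ∀ x, |g x| ≤ C) : Continuous (convC g f) := by
  -- `g` may be discontinuous, so the variable is first moved into `f`.
  have hcont : Continuous fun x => ∫ t in -π..π, f (x - t) * (g t : ℂ) := by
    refine intervalIntegral.continuous_of_dominated_interval (bound := fun _ => M * C) (fun x => ?_)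
      (fun x => Eventually.of_forall fun t _ => ?_) intervalIntegrable_const
      (Eventually.of_forall fun t _ => by fun_prop)
    · exact ((hf.comp (continuous_const.sub continuous_id)).aestronglyMeasurable.mul
        (Complex.measurable_ofReal.comp hg).aestronglyMeasurable)
    · rw [norm_mul, Complex.norm_real, Real.norm_eq_abs]
      exact mul_le_mul (hfM _) (hgC t) (abs_nonneg _) ((norm_nonneg _).trans (hfM 0))
  exact hcont.congr fun x => (convC_eq_integral_sub_mul hfp hgp x).symm

lemma convC_convR {f : ℝ → ℂ} {g k : ℝ → ℝ} {M Cg Ck : ℝ} (hf : Measurable f)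
    (hfM : ∀ x, ‖f x‖ ≤ M) (hg : Measurable g) (hgC : ∀ x, |g x| ≤ Cg) (hk : Measurable k)
    (hkC : ∀ x, |k x| ≤ Ck) (x : ℝ) :
    convC (convR g k) f x = ∫ v in -π..π, (g v : ℂ) * convC k f (x - v) := by
  have hππ : -π ≤ π := by linarith [Real.pi_pos]
  set μ := volume.restrict (Ioc (-π) π)
  set φ : ℝ → ℝ → ℂ := fun u v => f u * ((g v * k (x - u - v) : ℝ) : ℂ)
  have hint : Integrable (uncurry φ) (μ.prod μ) := by
    refine Integrable.mono' (integrable_const (M * (Cg * Ck))) ?_ (Eventually.of_forall fun p => ?_)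
    · exact ((hf.comp measurable_fst).mul (Complex.measurable_ofReal.comp
        ((hg.comp measurable_snd).mul (hk.comp ((measurable_const.sub measurable_fst).sub
          measurable_snd))))).aestronglyMeasurable
    · rw [uncurry, norm_mul, Complex.norm_real, Real.norm_eq_abs, abs_mul]
      exact mul_le_mul (hfM _) (mul_le_mul (hgC _) (hkC _) (abs_nonneg _)
        ((abs_nonneg _).trans (hgC 0))) (by positivity) ((norm_nonneg _).trans (hfM 0))
  calc convC (convR g k) f x = ∫ u, ∫ v, φ u v ∂μ ∂μ := by
        simp only [convC, convR, intervalIntegral.integral_of_le hππ]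
        refine integral_congr_ae (Eventually.of_forall fun u => ?_)
        simp only [φ, μ, integral_const_mul, integral_complex_ofReal, sub_sub]
    _ = ∫ v, ∫ u, φ u v ∂μ ∂μ := integral_integral_swap hint
    _ = ∫ v in -π..π, (g v : ℂ) * convC k f (x - v) := by
        rw [intervalIntegral.integral_of_le hππ]
        refine integral_congr_ae (Eventually.of_forall fun v => ?_)
        simp only [φ, convC, intervalIntegral.integral_of_le hππ, ← integral_const_mul]
        refine integral_congr_ae (Eventually.of_forall fun u => ?_)
        simp only [sub_right_comm x u v]
        push_cast
        ring

lemma integral_B1_mul {h : ℝ} (hh : 0 < h) (hhπ : h < π) (F : ℝ → ℂ) :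
    ∫ v in -π..π, (B1 h v : ℂ) * F v = ((2 * h)⁻¹ : ℝ) * ∫ v in -h..h, F v := by
  have hsub : Icc (-h) h ⊆ Ioc (-π) π := fun v hv => ⟨by linarith [hv.1], hv.2.trans hhπ.le⟩
  have hind : EqOn (fun v => (B1 h v : ℂ) * F v)
      ((Icc (-h) h).indicator fun v => ((2 * h)⁻¹ : ℝ) * F v) (Ioc (-π) π) := fun v hv => by
    by_cases hvh : v ∈ Icc (-h) h <;> simp [B1_eq_indicator (Ioc_subset_Icc_self hv), hvh]
  rw [intervalIntegral.integral_of_le (by linarith [Real.pi_pos]),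
    setIntegral_congr_fun measurableSet_Ioc hind, integral_indicator measurableSet_Icc,
    Measure.restrict_restrict measurableSet_Icc, inter_eq_left.mpr hsub,
    integral_Icc_eq_integral_Ioc, ← intervalIntegral.integral_of_le (by linarith),
    intervalIntegral.integral_const_mul]

lemma convC_B_add_two {f : ℝ → ℂ} {M : ℝ} (hf : Measurable f) (hfM : ∀ x, ‖f x‖ ≤ M)
    {h : ℝ} (hh : 0 < h) (hhπ : h < π) (m : ℕ) (x : ℝ) :
    convC (B h (m + 2)) f x = ((2 * h)⁻¹ : ℝ) * ∫ t in x - h..x + h, convC (B h (m + 1)) f t := by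
  obtain ⟨C, hC⟩ := exists_abs_B_le h (m + 1)
  rw [show B h (m + 2) = convR (B1 h) (B h (m + 1)) from rfl,
    convC_convR hf hfM (measurable_B1 h) (abs_B1_le h) (measurable_B h (m + 1)) hC,
    integral_B1_mul hh hhπ, intervalIntegral.integral_comp_sub_left, sub_neg_eq_add]

lemma hasDerivAt_integral_sub_add {E : Type*} [NormedAddCommGroup E] [NormedSpace ℝ E]
    [CompleteSpace E] {F : ℝ → E} (hF : Continuous F) (h x : ℝ) :
    HasDerivAt (fun y => ∫ t in y - h..y + h, F t) (F (x + h) - F (x - h)) x := by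
  have hsplit : (fun y => ∫ t in y - h..y + h, F t)
      = fun y => (∫ t in 0..y + h, F t) - ∫ t in 0..y - h, F t :=
    funext fun y => (intervalIntegral.integral_interval_sub_left
      (hF.intervalIntegrable _ _) (hF.intervalIntegrable _ _)).symm
  rw [hsplit]
  exact ((hF.integral_hasStrictDerivAt 0 _).hasDerivAt.comp_add_const x h).sub
    ((hF.integral_hasStrictDerivAt 0 _).hasDerivAt.comp_sub_const x h)

theorem stmt5_general (f : ℝ → ℂ) (hf : Continuous f) (hper : Function.Periodic f (2 * Real.pi))
    (h : ℝ) (hh : 0 < h) (hhπ : h < Real.pi) (s : ℕ) (hs : 2 ≤ s) (x : ℝ) :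
    HasDerivAt (fun y => convC (B h s) f y)
      (((2 * h)⁻¹ : ℝ) * (convC (B h (s - 1)) f (x + h) - convC (B h (s - 1)) f (x - h)))
      x := by
  obtain ⟨m, rfl⟩ : ∃ m, s = m + 2 := ⟨s - 2, by omega⟩
  obtain ⟨M, hM⟩ := isBounded_iff_forall_norm_le.mp
    (hper.isBounded_of_continuous Real.two_pi_pos.ne' hf)
  have hfM : ∀ x, ‖f x‖ ≤ M := fun x => hM _ (mem_range_self x)
  obtain ⟨C, hC⟩ := exists_abs_B_le h (m + 1)
  have hF : Continuous (convC (B h (m + 1)) f) :=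
    continuous_convC hf hper hfM (measurable_B h _) (B_periodic h _) hC
  have hsmooth : (fun y => convC (B h (m + 2)) f y)
      = fun y => ((2 * h)⁻¹ : ℝ) * ∫ t in y - h..y + h, convC (B h (m + 1)) f t :=
    funext (convC_B_add_two hf.measurable hfM hh hhπ m)
  rw [hsmooth]
  exact (hasDerivAt_integral_sub_add hF h x).const_mul _

/-- Differentiation of the smoothed function: for continuous `2π`-periodic `f`,
`0 < h < π`, `s ≥ 2`, `sh < π`, the function `x ↦ (f * B_h^s)(x)` is differentiable
with derivative `(2h)⁻¹ [(f * B_h^{s-1})(x+h) - (f * B_h^{s-1})(x-h)]`. -/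
theorem stmt5 (f : ℝ → ℂ) (hf : Continuous f) (hper : Function.Periodic f (2 * Real.pi))
    (h : ℝ) (hh : 0 < h) (hhπ : h < Real.pi) (s : ℕ) (hs : 2 ≤ s)
    (hsh : (s : ℝ) * h < Real.pi) (x : ℝ) :
    HasDerivAt (fun y => convC (B h s) f y)
      (((2 * h)⁻¹ : ℝ) * (convC (B h (s - 1)) f (x + h) - convC (B h (s - 1)) f (x - h)))
      x :=
  stmt5_general f hf hper h hh hhπ s hs x
end
end

section
/- Let n ≥ 0, let f be a continuous 2π-periodic function whose Fourier coefficients ĉ_j(f) vanish for all |j| ≤ n, and let g ∈ L¹(T). Then the convolution satisfies ‖g * f‖_∞ ≤ (inf_{τ ∈ T_n} ‖g − τ‖₁) · ‖f‖_∞, where the infimum is over trigonometric polynomials τ of degree ≤ n and ‖·‖₁ denotes the L¹ norm ∫_T |·|du. -/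
open scoped Real BigOperators
open MeasureTheory

noncomputable section

open Function Complex

/-!
Convolving `f` with the character `e^{iju}` multiplies `e^{ijx}` by `2π ĉ_j(f)`, so convolution
with any `τ ∈ T_n` annihilates `f ∈ C(T_n^⊥)`. Hence `g * f = (g - τ) * f`, whose sup norm is at
most `‖g - τ‖₁ ‖f‖_∞`; taking the infimum over `τ` gives the bound.
-/

lemma Function.Periodic.norm_le_supNorm {f : ℝ → ℂ} {c : ℝ} (hper : Periodic f c) (hc : c ≠ 0)
    (hf : Continuous f) (x : ℝ) : ‖f x‖ ≤ supNorm f := by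
  obtain ⟨C, hC⟩ := (hper.isBounded_of_continuous hc hf).exists_norm_le
  exact le_csSup ⟨C, by rintro _ ⟨y, rfl⟩; exact hC _ ⟨y, rfl⟩⟩ ⟨x, rfl⟩

lemma IsTrigPoly.continuous {n : ℕ} {τ : ℝ → ℂ} (hτ : IsTrigPoly n τ) : Continuous τ := by
  obtain ⟨c, hc⟩ := hτ
  rw [funext hc]
  fun_prop

lemma isTrigPoly_zero (n : ℕ) : IsTrigPoly n 0 := ⟨0, fun _ => by simp⟩

lemma Function.Periodic.intervalIntegral_comp_sub_left {V : Type*} [NormedAddCommGroup V]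
    [NormedSpace ℝ V] {h : ℝ → V} {T : ℝ} (hh : Periodic h T) (a x : ℝ) :
    ∫ u in a..a + T, h (x - u) = ∫ u in a..a + T, h u := by
  rw [intervalIntegral.integral_comp_sub_left, ← hh.intervalIntegral_add_eq (x - (a + T)) a]
  ring_nf

lemma periodic_exp_int_mul_I (j : ℤ) :
    Periodic (fun v : ℝ => exp (j * v * I)) (2 * π) := by
  intro v
  dsimp only
  rw [show (j : ℂ) * ↑(v + 2 * π) * I = j * v * I + j * (2 * π * I) by push_cast; ring,
    exp_add, exp_int_mul_two_pi_mul_I, mul_one]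

lemma integral_exp_mul_comp_sub {f : ℝ → ℂ} (hper : Periodic f (2 * π)) (j : ℤ) (x : ℝ) :
    ∫ u in -π..π, exp (j * u * I) * f (x - u) = 2 * π * fc f j * exp (j * x * I) := by
  have hG : Periodic (fun v => f v * exp (-j * v * I)) (2 * π) := by
    simpa [neg_mul, Int.cast_neg] using hper.mul (periodic_exp_int_mul_I (-j))
  have hsplit : ∀ u : ℝ, exp (j * u * I) * f (x - u)
      = exp (j * x * I) * (f (x - u) * exp (-j * ↑(x - u) * I)) := by
    intro u
    rw [mul_left_comm, ← exp_add, mul_comm]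
    congr 2
    push_cast; ring
  have := hG.intervalIntegral_comp_sub_left (-π) x
  rw [show -π + 2 * π = π by ring] at this
  simp_rw [hsplit, intervalIntegral.integral_const_mul, this, fc]
  field_simp [Real.pi_ne_zero]

lemma IsTrigPoly.integral_mul_comp_sub_eq_zero {n : ℕ} {τ f : ℝ → ℂ} (hτ : IsTrigPoly n τ)
    (hf : Continuous f) (hper : Periodic f (2 * π)) (hspec : ∀ j : ℤ, |j| ≤ (n : ℤ) → fc f j = 0)
    (x : ℝ) : ∫ u in -π..π, τ u * f (x - u) = 0 := by
  obtain ⟨c, hc⟩ := hτ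
  simp_rw [hc, Finset.sum_mul, mul_assoc (c _)]
  rw [intervalIntegral.integral_finsetSum fun j _ => by
    apply Continuous.intervalIntegrable; fun_prop]
  refine Finset.sum_eq_zero fun j hj => ?_
  rw [intervalIntegral.integral_const_mul, integral_exp_mul_comp_sub hper,
    hspec j (abs_le.2 (Finset.mem_Icc.1 hj))]
  simp

lemma norm_integral_mul_comp_sub_le {g f : ℝ → ℂ} (hg : IntervalIntegrable g volume (-π) π)
    (hf : Continuous f) {M : ℝ} (hM : ∀ y, ‖f y‖ ≤ M) (x : ℝ) :
    ‖∫ u in -π..π, g u * f (x - u)‖ ≤ L1C g * M := by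
  have hle : -π ≤ π := by linarith [Real.pi_pos]
  calc ‖∫ u in -π..π, g u * f (x - u)‖
      ≤ ∫ u in -π..π, ‖g u * f (x - u)‖ := intervalIntegral.norm_integral_le_integral_norm hle
    _ ≤ ∫ u in -π..π, ‖g u‖ * M := by
        refine intervalIntegral.integral_mono_on hle
          (hg.mul_continuousOn (by fun_prop)).norm (hg.norm.mul_const M) fun u _ => ?_
        rw [norm_mul]
        exact mul_le_mul_of_nonneg_left (hM _) (norm_nonneg _)
    _ = L1C g * M := intervalIntegral.integral_mul_const M _

theorem stmt9_general (n : ℕ) (f : ℝ → ℂ) (hf : Continuous f)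
    (hper : Function.Periodic f (2 * Real.pi))
    (hspec : ∀ j : ℤ, |j| ≤ (n : ℤ) → fc f j = 0)
    (g : ℝ → ℂ)
    (hgint : IntervalIntegrable g MeasureTheory.volume (-Real.pi) Real.pi) :
    supNorm (fun x => ∫ u in (-Real.pi)..Real.pi, g u * f (x - u)) ≤
      sInf {y : ℝ | ∃ τ : ℝ → ℂ, IsTrigPoly n τ ∧ y = L1C (fun u => g u - τ u)} *
        supNorm f := by
  have hfM := hper.norm_le_supNorm Real.two_pi_pos.ne' hf
  set S := {y : ℝ | ∃ τ : ℝ → ℂ, IsTrigPoly n τ ∧ y = L1C (fun u => g u - τ u)}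
  have hS : S.Nonempty := ⟨_, 0, isTrigPoly_zero n, rfl⟩
  refine csSup_le ⟨_, 0, rfl⟩ ?_
  rintro _ ⟨x, rfl⟩
  rw [mul_comm, ← smul_eq_mul, ← Real.sInf_smul_of_nonneg ((norm_nonneg _).trans (hfM 0))]
  refine le_csInf hS.smul_set ?_
  rintro _ ⟨_, ⟨τ, hτ, rfl⟩, rfl⟩
  have hτint := hτ.continuous.intervalIntegrable (μ := volume) (-π) π
  calc ‖∫ u in -π..π, g u * f (x - u)‖
      = ‖∫ u in -π..π, (g u - τ u) * f (x - u)‖ := by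
        simp_rw [sub_mul]
        rw [intervalIntegral.integral_sub (hgint.mul_continuousOn (by fun_prop))
          (hτint.mul_continuousOn (by fun_prop)), hτ.integral_mul_comp_sub_eq_zero hf hper hspec,
          sub_zero]
    _ ≤ L1C (fun u => g u - τ u) * supNorm f :=
        norm_integral_mul_comp_sub_le (hgint.sub hτint) hf hfM x
    _ = supNorm f • L1C (fun u => g u - τ u) := mul_comm _ _

/-- If `f ∈ C(T_n^⊥)` and `g ∈ L¹(T)`, then
`‖g * f‖_∞ ≤ (inf_{τ ∈ T_n} ‖g - τ‖₁) · ‖f‖_∞`. -/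
theorem stmt9 (n : ℕ) (f : ℝ → ℂ) (hf : Continuous f)
    (hper : Function.Periodic f (2 * Real.pi))
    (hspec : ∀ j : ℤ, |j| ≤ (n : ℤ) → fc f j = 0)
    (g : ℝ → ℂ) (hgper : Function.Periodic g (2 * Real.pi))
    (hgint : IntervalIntegrable g MeasureTheory.volume (-Real.pi) Real.pi) :
    supNorm (fun x => ∫ u in (-Real.pi)..Real.pi, g u * f (x - u)) ≤
      sInf {y : ℝ | ∃ τ : ℝ → ℂ, IsTrigPoly n τ ∧ y = L1C (fun u => g u - τ u)} *
        supNorm f :=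
  stmt9_general n f hf hper hspec g hgint
end
end
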